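/- Let 0 ≤ a ≤ 1 and define the linear functional L on C[0,1] by L(f) := a·∫_0^1 f(t) dt + (1−a)·f(1/2). Then for all continuous functions f, g : [0,1] → ℝ one has |L(f·g) − L(f)·L(g)| ≤ (1/2)·a·(2−a)·osc(f)·osc(g), where osc(f) := sup{|f(x) − f(y)| : x, y ∈ [0,1]} and similarly for g. -/

import Mathlib

/-!
With `I` the integral over `[0,1]` and `c = 1/2`,
`L(fg) - L(f) L(g) = a² (I(fg) - I(f) I(g)) + a (1 - a) I((f - f c)(g - g c))`.
The second integral is at most `osc f · osc g` pointwise. The first equals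
`½ ∬ (f x - f y)(g x - g y) dx dy`, so it is at most half of that. The constant is
`a²/2 + a (1 - a) = a (2 - a) / 2`.
-/

open MeasureTheory

lemma abs_sub_le_sSup_abs_sub_of_isCompact {α : Type*} [TopologicalSpace α] {K : Set α}
    (hK : IsCompact K) {h : α → ℝ} (hh : ContinuousOn h K) {s t : α} (hs : s ∈ K) (ht : t ∈ K) :
    |h s - h t| ≤ sSup {d : ℝ | ∃ s ∈ K, ∃ t ∈ K, d = |h s - h t|} := by
  obtain ⟨M, hM⟩ := hK.exists_bound_of_continuousOn hh
  refine le_csSup ⟨M + M, ?_⟩ ⟨s, hs, t, ht, rfl⟩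
  rintro d ⟨s, hs, t, ht, rfl⟩
  exact (abs_sub _ _).trans (add_le_add (hM s hs) (hM t ht))

section ProbabilityMeasure

variable {α : Type*} [MeasurableSpace α] {μ : Measure α} [IsProbabilityMeasure μ]
  {f g : α → ℝ}

lemma integral_sub_mul_sub (hf : Integrable f μ) (hg : Integrable g μ)
    (hfg : Integrable (fun x => f x * g x) μ) (c d : ℝ) :
    ∫ x, (f x - c) * (g x - d) ∂μ =
      ∫ x, f x * g x ∂μ - d * ∫ x, f x ∂μ - c * ∫ x, g x ∂μ + c * d := by
  have hexpand : (fun x => (f x - c) * (g x - d)) =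
      fun x => f x * g x - f x * d - c * g x + c * d := by
    funext x; ring
  rw [hexpand, integral_add, integral_sub, integral_sub, integral_mul_const, integral_const_mul,
    integral_const, probReal_univ, one_smul]
  · ring
  all_goals fun_prop

lemma integral_integral_sub_mul_sub (hf : Integrable f μ) (hg : Integrable g μ)
    (hfg : Integrable (fun x => f x * g x) μ) :
    ∫ y, ∫ x, (f x - f y) * (g x - g y) ∂μ ∂μ =
      2 * (∫ x, f x * g x ∂μ - (∫ x, f x ∂μ) * ∫ x, g x ∂μ) := by
  simp_rw [integral_sub_mul_sub hf hg hfg]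
  rw [integral_add, integral_sub, integral_sub, integral_mul_const, integral_mul_const,
    integral_const, probReal_univ, one_smul]
  · ring
  all_goals fun_prop

variable {s : Set α} {C : ℝ} (hs : ∀ᵐ x ∂μ, x ∈ s)
  (hC : ∀ x ∈ s, ∀ y ∈ s, |f x - f y| * |g x - g y| ≤ C)
include hs hC

lemma abs_integral_sub_mul_sub_le (hf : Integrable f μ) (hg : Integrable g μ)
    (hfg : Integrable (fun x => f x * g x) μ) {c : α} (hc : c ∈ s) :
    |∫ x, f x * g x ∂μ - g c * ∫ x, f x ∂μ - f c * ∫ x, g x ∂μ + f c * g c| ≤ C := by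
  rw [← integral_sub_mul_sub hf hg hfg]
  simpa using norm_integral_le_of_norm_le_const (μ := μ)
    (f := fun x => (f x - f c) * (g x - g c)) (hs.mono fun x hx => by
      simpa only [Real.norm_eq_abs, abs_mul] using hC x hx c hc)

lemma abs_integral_mul_sub_integral_mul_integral_le (hf : Integrable f μ) (hg : Integrable g μ)
    (hfg : Integrable (fun x => f x * g x) μ) :
    |∫ x, f x * g x ∂μ - (∫ x, f x ∂μ) * ∫ x, g x ∂μ| ≤ C / 2 := by
  have h := norm_integral_le_of_norm_le_const (μ := μ)
    (f := fun y => ∫ x, (f x - f y) * (g x - g y) ∂μ) (C := C) <| hs.mono fun y hy => by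
      rw [Real.norm_eq_abs, integral_sub_mul_sub hf hg hfg]
      exact abs_integral_sub_mul_sub_le hs hC hf hg hfg hy
  rw [integral_integral_sub_mul_sub hf hg hfg, probReal_univ, mul_one, Real.norm_eq_abs,
    abs_mul, abs_two] at h
  linarith

lemma abs_mixed_functional_sub_le {a : ℝ} (ha0 : 0 ≤ a) (ha1 : a ≤ 1) (hf : Integrable f μ)
    (hg : Integrable g μ) (hfg : Integrable (fun x => f x * g x) μ) {c : α} (hc : c ∈ s) :
    |(a * ∫ x, f x * g x ∂μ + (1 - a) * (f c * g c)) -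
        (a * ∫ x, f x ∂μ + (1 - a) * f c) * (a * ∫ x, g x ∂μ + (1 - a) * g c)| ≤
      1 / 2 * (a * (2 - a)) * C := by
  set A := ∫ x, f x * g x ∂μ - (∫ x, f x ∂μ) * ∫ x, g x ∂μ
  set B := ∫ x, f x * g x ∂μ - g c * ∫ x, f x ∂μ - f c * ∫ x, g x ∂μ + f c * g c
  have hA : |A| ≤ C / 2 := abs_integral_mul_sub_integral_mul_integral_le hs hC hf hg hfg
  have hB : |B| ≤ C := abs_integral_sub_mul_sub_le hs hC hf hg hfg hc
  have h1a : 0 ≤ 1 - a := by linarith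
  calc _ = |a * a * A + a * (1 - a) * B| := by congr 1; ring
    _ ≤ a * a * |A| + a * (1 - a) * |B| := by
      refine (abs_add_le _ _).trans_eq ?_
      rw [abs_mul (a * a), abs_mul (a * (1 - a)), abs_of_nonneg (mul_nonneg ha0 ha0),
        abs_of_nonneg (mul_nonneg ha0 h1a)]
    _ ≤ a * a * (C / 2) + a * (1 - a) * C := by gcongr
    _ = 1 / 2 * (a * (2 - a)) * C := by ring

end ProbabilityMeasure

theorem chebyshev_gruss_mixed_functional (a : ℝ) (ha0 : 0 ≤ a) (ha1 : a ≤ 1)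
    (L : (ℝ → ℝ) → ℝ)
    (hL : ∀ f : ℝ → ℝ, L f = a * (∫ t in (0:ℝ)..1, f t) + (1 - a) * f (1 / 2))
    (f g : ℝ → ℝ) (hf : ContinuousOn f (Set.Icc 0 1)) (hg : ContinuousOn g (Set.Icc 0 1)) :
    |L (fun t => f t * g t) - L f * L g| ≤
      (1 / 2) * (a * (2 - a)) *
        sSup {d : ℝ | ∃ s ∈ Set.Icc (0:ℝ) 1, ∃ t ∈ Set.Icc (0:ℝ) 1, d = |f s - f t|} *
        sSup {d : ℝ | ∃ s ∈ Set.Icc (0:ℝ) 1, ∃ t ∈ Set.Icc (0:ℝ) 1, d = |g s - g t|} := by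
  have : IsProbabilityMeasure (volume.restrict (Set.Ioc (0:ℝ) 1)) := ⟨by simp⟩
  have hsupp : ∀ᵐ x ∂(volume.restrict (Set.Ioc (0:ℝ) 1)), x ∈ Set.Icc (0:ℝ) 1 :=
    ae_restrict_of_forall_mem measurableSet_Ioc fun _ hx => Set.Ioc_subset_Icc_self hx
  have hosc {h : ℝ → ℝ} (hh : ContinuousOn h (Set.Icc 0 1)) {s t : ℝ} (hs : s ∈ Set.Icc 0 1)
      (ht : t ∈ Set.Icc 0 1) := abs_sub_le_sSup_abs_sub_of_isCompact isCompact_Icc hh hs ht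
  have hC : ∀ x ∈ Set.Icc (0:ℝ) 1, ∀ y ∈ Set.Icc (0:ℝ) 1, |f x - f y| * |g x - g y| ≤ _ :=
    fun x hx y hy => mul_le_mul (hosc hf hx hy) (hosc hg hx hy) (abs_nonneg _)
      ((abs_nonneg _).trans (hosc hf hx hy))
  have hint {h : ℝ → ℝ} (hh : ContinuousOn h (Set.Icc 0 1)) :
      Integrable h (volume.restrict (Set.Ioc (0:ℝ) 1)) :=
    hh.integrableOn_Icc.mono_set Set.Ioc_subset_Icc_self
  simp only [hL, intervalIntegral.integral_of_le zero_le_one]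
  exact (abs_mixed_functional_sub_le hsupp hC ha0 ha1 (hint hf) (hint hg) (hint (hf.mul hg))
    ⟨by norm_num, by norm_num⟩).trans_eq (mul_assoc _ _ _).symm
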